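/- arXiv:math/0210134 — 6 statements merged into one kernel-verified Lean document; each statement's English description precedes it below -/
import Mathlib

section
/- With notation as above (f₀, h₀ defined from symmetric components C₁₁₁, C₁₁₂, C₁₂₂, C₂₂₂, and σ₁₁ = (C₁₁₁,C₁₁₂), σ₁₂ = (C₁₁₂,C₁₂₂), σ₂₂ = (C₁₂₂,C₂₂₂) in ℝ²), the ellipse of curvature is a circle, i.e. ‖σ₁₁-σ₂₂‖²/4 = ‖σ₁₂‖² and ⟨σ₁₁-σ₂₂, σ₁₂⟩ = 0, if and only if f₀ · conj(h₀) = 0, i.e. f₀ = 0 or h₀ = 0. -/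
/-!
Identify `ℝ²` with `ℂ` and put `a = (σ₁₁ - σ₂₂)/2`, `b = σ₁₂`. Then `conj f₀ = a + i b` and
`conj h₀ = a - i b`, so `f₀ · conj h₀ = conj (a + i b) (a - i b) = ‖a‖² - ‖b‖² - 2i⟪a, b⟫`,
which vanishes exactly when `‖a‖ = ‖b‖` and `a ⟂ b`: the ellipse of curvature is a circle.
-/

open RealInnerProductSpace Complex ComplexConjugate

theorem Complex.conj_add_I_mul_mul_sub_I_mul (a b : ℂ) :
    conj (a + I * b) * (a - I * b) = ((‖a‖ ^ 2 - ‖b‖ ^ 2 : ℝ) : ℂ) - 2 * I * (⟪a, b⟫ : ℝ) := by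
  apply Complex.ext <;> simp [Complex.sq_norm, normSq_apply, Complex.inner] <;> ring

theorem Complex.conj_add_I_mul_mul_sub_I_mul_eq_zero_iff (a b : ℂ) :
    conj (a + I * b) * (a - I * b) = 0 ↔ ‖a‖ ^ 2 = ‖b‖ ^ 2 ∧ ⟪a, b⟫ = 0 := by
  rw [conj_add_I_mul_mul_sub_I_mul, Complex.ext_iff]
  simp only [sub_re, sub_im, ofReal_re, ofReal_im, mul_re, mul_im, I_re, I_im, re_ofNat,
    im_ofNat, zero_re, zero_im]
  constructor <;> rintro ⟨h₁, h₂⟩ <;> constructor <;> linarith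

theorem norm_sq_div_four_eq_and_inner_eq_zero_iff {E : Type*} [NormedAddCommGroup E]
    [InnerProductSpace ℝ E] (x y : E) :
    (‖x‖ ^ 2 / 4 = ‖y‖ ^ 2 ∧ ⟪x, y⟫ = 0) ↔
      (‖(2⁻¹ : ℝ) • x‖ ^ 2 = ‖y‖ ^ 2 ∧ ⟪(2⁻¹ : ℝ) • x, y⟫ = 0) := by
  have h_norm : ‖(2⁻¹ : ℝ) • x‖ ^ 2 = ‖x‖ ^ 2 / 4 := by
    rw [norm_smul, mul_pow]
    norm_num
    ring
  rw [h_norm, real_inner_smul_left, mul_eq_zero_iff_left (by norm_num)]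

/-- Central observation of the proof of Theorem 1: with `σ₁₁ = (C₁₁₁,C₁₁₂)`,
`σ₁₂ = (C₁₁₂,C₁₂₂)`, `σ₂₂ = (C₁₂₂,C₂₂₂)` in `ℝ²` and
`f₀ = ((C₁₁₁ - 3C₁₂₂) + i(C₂₂₂ - 3C₁₁₂))/2`, `h₀ = ((C₁₁₁ + C₁₂₂) + i(C₁₁₂ + C₂₂₂))/2`,
the ellipse of curvature is a circle, i.e. `‖σ₁₁-σ₂₂‖²/4 = ‖σ₁₂‖²` and
`⟨σ₁₁-σ₂₂, σ₁₂⟩ = 0`, iff `f₀ · conj h₀ = 0`, i.e. iff `f₀ = 0` or `h₀ = 0`. -/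
theorem circle_iff_f_or_h_zero (C111 C112 C122 C222 : ℝ)
    (σ11 σ12 σ22 : EuclideanSpace ℝ (Fin 2))
    (h11 : σ11 = (WithLp.equiv 2 (Fin 2 → ℝ)).symm ![C111, C112])
    (h12 : σ12 = (WithLp.equiv 2 (Fin 2 → ℝ)).symm ![C112, C122])
    (h22 : σ22 = (WithLp.equiv 2 (Fin 2 → ℝ)).symm ![C122, C222])
    (f0 h0 : ℂ)
    (hf : f0 = (((C111 - 3 * C122 : ℝ) : ℂ) + Complex.I * ((C222 - 3 * C112 : ℝ) : ℂ)) / 2)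
    (hh : h0 = (((C111 + C122 : ℝ) : ℂ) + Complex.I * ((C112 + C222 : ℝ) : ℂ)) / 2) :
    ((‖σ11 - σ22‖ ^ 2 / 4 = ‖σ12‖ ^ 2 ∧ ⟪σ11 - σ22, σ12⟫ = (0 : ℝ)) ↔
        f0 * (starRingEnd ℂ) h0 = 0) ∧
      (f0 * (starRingEnd ℂ) h0 = 0 ↔ (f0 = 0 ∨ h0 = 0)) := by
  set e := orthonormalBasisOneI.repr.symm
  set a := e ((2⁻¹ : ℝ) • (σ11 - σ22))
  set b := e σ12
  have hf_conj : conj f0 = a + I * b := by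
    simp only [a, b, e, orthonormalBasisOneI_repr_symm_apply, h11, h12, h22, hf]
    apply Complex.ext <;> simp [map_ofNat] <;> ring
  have hh_conj : conj h0 = a - I * b := by
    simp only [a, b, e, orthonormalBasisOneI_repr_symm_apply, h11, h12, h22, hh]
    apply Complex.ext <;> simp [map_ofNat] <;> ring
  have hfh : f0 * conj h0 = conj (a + I * b) * (a - I * b) := by
    rw [← hf_conj, ← hh_conj, conj_conj]
  refine ⟨?_, by rw [mul_eq_zero, map_eq_zero]⟩
  rw [hfh, conj_add_I_mul_mul_sub_I_mul_eq_zero_iff, norm_sq_div_four_eq_and_inner_eq_zero_iff,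
    e.norm_map, e.norm_map, e.inner_map_map]
end

section
/- For t ≥ 0, let c = cosh t, s = sinh t, and define F_t : S² → ℂ³ by F_t(x,y,z) = (1/(c² + s²z²))·(c x + i s x z, c y + i s y z, z + i s c (1+z²)), grouping the six real coordinates into three complex ones. Then for every (x,y,z) ∈ S², ‖F_t(x,y,z)‖² = 1, i.e. F_t maps into the unit sphere S⁵ ⊂ ℂ³. -/
/-! Writing `D = c² + s²z²`, the squared moduli of the three unnormalised components sum to
`(c² + s²z²)(x² + y²) + z² + s²c²(1 + z²)²`, and on the sphere, using `c² - s² = 1`, this is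
exactly `D²`; dividing by `D² > 0` gives `1`. -/

lemma Complex.sq_norm_ofReal_add_I_mul (a b : ℝ) : ‖(a : ℂ) + I * b‖ ^ 2 = a ^ 2 + b ^ 2 := by
  rw [mul_comm, norm_add_mul_I, Real.sq_sqrt (by positivity)]

lemma Complex.sq_norm_ofReal_mul (r : ℝ) (w : ℂ) : ‖(r : ℂ) * w‖ ^ 2 = r ^ 2 * ‖w‖ ^ 2 := by
  rw [norm_mul, mul_pow, norm_real, Real.norm_eq_abs, sq_abs]

lemma whitney_numerator_sq_sum {c s x y z : ℝ} (hcs : c ^ 2 - s ^ 2 = 1)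
    (hxyz : x ^ 2 + y ^ 2 + z ^ 2 = 1) :
    ((c * x) ^ 2 + (s * x * z) ^ 2) + ((c * y) ^ 2 + (s * y * z) ^ 2)
      + (z ^ 2 + (s * c * (1 + z ^ 2)) ^ 2) = (c ^ 2 + s ^ 2 * z ^ 2) ^ 2 := by
  linear_combination (c ^ 2 + s ^ 2 * z ^ 2) * hxyz + (s ^ 2 * z ^ 4 - z ^ 2 - c ^ 2) * hcs

theorem whitney_lift_maps_into_sphere_general (t : ℝ) (c s : ℝ)
    (hc : c = Real.cosh t) (hs : s = Real.sinh t)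
    (x y z : ℝ) (hxyz : x ^ 2 + y ^ 2 + z ^ 2 = 1)
    (F1 F2 F3 : ℂ)
    (hF1 : F1 = ((1 / (c ^ 2 + s ^ 2 * z ^ 2) : ℝ) : ℂ) *
      ((c * x : ℝ) + Complex.I * ((s * x * z : ℝ) : ℂ)))
    (hF2 : F2 = ((1 / (c ^ 2 + s ^ 2 * z ^ 2) : ℝ) : ℂ) *
      ((c * y : ℝ) + Complex.I * ((s * y * z : ℝ) : ℂ)))
    (hF3 : F3 = ((1 / (c ^ 2 + s ^ 2 * z ^ 2) : ℝ) : ℂ) *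
      ((z : ℂ) + Complex.I * ((s * c * (1 + z ^ 2) : ℝ) : ℂ))) :
    ‖F1‖ ^ 2 + ‖F2‖ ^ 2 + ‖F3‖ ^ 2 = 1 := by
  have hcs : c ^ 2 - s ^ 2 = 1 := by rw [hc, hs]; exact Real.cosh_sq_sub_sinh_sq t
  have hD : 0 < c ^ 2 + s ^ 2 * z ^ 2 := by
    have : 0 < c := hc ▸ Real.cosh_pos t
    positivity
  subst hF1 hF2 hF3
  simp only [Complex.sq_norm_ofReal_mul, Complex.sq_norm_ofReal_add_I_mul]
  rw [← mul_add, ← mul_add, whitney_numerator_sq_sum hcs hxyz]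
  field_simp

/-- The horizontal lift `F_t` of the Whitney sphere `Φ_t : S² → ℂP²` maps `S²` into the
unit sphere `S⁵ ⊂ ℂ³`: with `c = cosh t`, `s = sinh t` and
`F_t(x,y,z) = (1/(c²+s²z²))·(cx + isxz, cy + isyz, z + isc(1+z²))`,
one has `|F₁|² + |F₂|² + |F₃|² = 1` whenever `x²+y²+z² = 1`. -/
theorem whitney_lift_maps_into_sphere (t : ℝ) (ht : 0 ≤ t) (c s : ℝ)
    (hc : c = Real.cosh t) (hs : s = Real.sinh t)
    (x y z : ℝ) (hxyz : x ^ 2 + y ^ 2 + z ^ 2 = 1)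
    (F1 F2 F3 : ℂ)
    (hF1 : F1 = ((1 / (c ^ 2 + s ^ 2 * z ^ 2) : ℝ) : ℂ) *
      ((c * x : ℝ) + Complex.I * ((s * x * z : ℝ) : ℂ)))
    (hF2 : F2 = ((1 / (c ^ 2 + s ^ 2 * z ^ 2) : ℝ) : ℂ) *
      ((c * y : ℝ) + Complex.I * ((s * y * z : ℝ) : ℂ)))
    (hF3 : F3 = ((1 / (c ^ 2 + s ^ 2 * z ^ 2) : ℝ) : ℂ) *
      ((z : ℂ) + Complex.I * ((s * c * (1 + z ^ 2) : ℝ) : ℂ))) :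
    ‖F1‖ ^ 2 + ‖F2‖ ^ 2 + ‖F3‖ ^ 2 = 1 :=
  whitney_lift_maps_into_sphere_general t c s hc hs x y z hxyz F1 F2 F3 hF1 hF2 hF3
end

section
/- For t ≥ 0 with c = cosh t, s = sinh t, the map F_t : S² → S⁵ ⊂ ℂ³, F_t(x,y,z) = (1/(c²+s²z²))·(cx + isxz, cy + isyz, z + isc(1+z²)), is horizontal with respect to the Hopf fibration: for every p ∈ S² and every u ∈ T_pS², the Hermitian inner product ⟨dF_t(u), iF_t(p)⟩_ℝ = 0, i.e. Re(h(dF_t(u), iF_t(p))) = 0 where h is the standard Hermitian product on ℂ³. -/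
open Metric
open scoped Manifold

/-- The horizontal lift `F_t : S² → S⁵ ⊂ ℂ³` of the Whitney sphere `Φ_t` in `ℂP²`:
`F_t(x,y,z) = (1/(c²+s²z²))·(cx + isxz, cy + isyz, z + isc(1+z²))`, with
`c = cosh t`, `s = sinh t`. -/
noncomputable def whitneyLift (t : ℝ) :
    (sphere (0 : EuclideanSpace ℝ (Fin 3)) 1) → ℂ × ℂ × ℂ := fun p =>
  let x : ℝ := (p : EuclideanSpace ℝ (Fin 3)) 0
  let y : ℝ := (p : EuclideanSpace ℝ (Fin 3)) 1
  let z : ℝ := (p : EuclideanSpace ℝ (Fin 3)) 2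
  let c : ℝ := Real.cosh t
  let s : ℝ := Real.sinh t
  (((1 / (c ^ 2 + s ^ 2 * z ^ 2) : ℝ) : ℂ) * ((c * x : ℝ) + Complex.I * ((s * x * z : ℝ) : ℂ)),
   ((1 / (c ^ 2 + s ^ 2 * z ^ 2) : ℝ) : ℂ) * ((c * y : ℝ) + Complex.I * ((s * y * z : ℝ) : ℂ)),
   ((1 / (c ^ 2 + s ^ 2 * z ^ 2) : ℝ) : ℂ) * ((z : ℂ) + Complex.I * ((s * c * (1 + z ^ 2) : ℝ) : ℂ)))

/-- The real part of the standard Hermitian product on `ℂ³`. -/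
noncomputable def hermRe (U V : ℂ × ℂ × ℂ) : ℝ :=
  (U.1 * (starRingEnd ℂ) V.1 + U.2.1 * (starRingEnd ℂ) V.2.1
    + U.2.2 * (starRingEnd ℂ) V.2.2).re

/-!
Write `F_t = φ • G` on all of `ℝ³`, with `φ = 1 / (c² + s² z²)` real and `G` the polynomial
numerator. Since `h(G, iG)` is purely imaginary, the term `dφ(v) • G` does not contribute, so
`Re h(dF(v), iF) = φ² Re h(dG(v), iG)`, and a direct computation gives
`Re h(dG(v), iG) = c s v_z (|p|² - 1)`. This vanishes on `S²` for every `v ∈ ℝ³`, tangent or not.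
-/

open Complex

theorem fderiv_ofReal_euclideanSpace_apply {ι : Type*} [Fintype ι] (i : ι)
    (q v : EuclideanSpace ℝ ι) :
    fderiv ℝ (fun y : EuclideanSpace ℝ ι => ((y i : ℝ) : ℂ)) q v = v i := by
  change fderiv ℝ (ofRealCLM.comp (EuclideanSpace.proj i)) q v = _
  rw [ContinuousLinearMap.fderiv]
  rfl

theorem hermRe_add_left (U U' V : ℂ × ℂ × ℂ) :
    hermRe (U + U') V = hermRe U V + hermRe U' V := by
  simp only [hermRe, Prod.fst_add, Prod.snd_add, add_mul, add_re]
  ring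

theorem hermRe_smul_left (r : ℝ) (U V : ℂ × ℂ × ℂ) : hermRe (r • U) V = r * hermRe U V := by
  simp only [hermRe, Prod.smul_fst, Prod.smul_snd, real_smul, mul_assoc, ← mul_add, re_ofReal_mul]

theorem hermRe_smul_right (r : ℝ) (U V : ℂ × ℂ × ℂ) : hermRe U (r • V) = r * hermRe U V := by
  simp only [hermRe, Prod.smul_fst, Prod.smul_snd, real_smul, map_mul, conj_ofReal,
    mul_left_comm _ (r : ℂ), ← mul_add, re_ofReal_mul]

theorem hermRe_I_smul_self (V : ℂ × ℂ × ℂ) : hermRe V (I • V) = 0 := by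
  simp only [hermRe, Prod.smul_fst, Prod.smul_snd, smul_eq_mul, map_mul, conj_I, add_re, mul_re,
    neg_re, neg_im, I_re, I_im, conj_re, conj_im, mul_im]
  ring

theorem hermRe_fderiv_smul {E : Type*} [NormedAddCommGroup E] [NormedSpace ℝ E]
    {φ : E → ℝ} {G : E → ℂ × ℂ × ℂ} {q : E} (hφ : DifferentiableAt ℝ φ q)
    (hG : DifferentiableAt ℝ G q) (v : E) :
    hermRe (fderiv ℝ (fun y => φ y • G y) q v) (I • φ q • G q) =
      φ q ^ 2 * hermRe (fderiv ℝ G q v) (I • G q) := by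
  rw [fderiv_fun_smul hφ hG, smul_comm]
  simp only [add_apply, smul_apply, ContinuousLinearMap.smulRight_apply, hermRe_add_left,
    hermRe_smul_left, hermRe_smul_right, hermRe_I_smul_self]
  ring

theorem mfderiv_comp_coe_sphere {E F : Type*} [NormedAddCommGroup E] [InnerProductSpace ℝ E]
    {n : ℕ} [Fact (Module.finrank ℝ E = n + 1)] [NormedAddCommGroup F] [NormedSpace ℝ F]
    {g : E → F} {p : sphere (0 : E) 1} (hg : DifferentiableAt ℝ g p) (u : TangentSpace (𝓡 n) p) :
    mfderiv (𝓡 n) 𝓘(ℝ, F) (g ∘ (↑)) p u =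
      fderiv ℝ g p (mfderiv (𝓡 n) 𝓘(ℝ, E) ((↑) : sphere (0 : E) 1 → E) p u) := by
  rw [mfderiv_comp p hg.mdifferentiableAt
    ((contMDiff_coe_sphere p).mdifferentiableAt one_ne_zero), mfderiv_eq_fderiv]
  rfl

section WhitneySphere

variable (t : ℝ)

noncomputable def whitneyNumerator (q : EuclideanSpace ℝ (Fin 3)) : ℂ × ℂ × ℂ :=
  ((Real.cosh t * q 0 : ℝ) + I * (Real.sinh t * q 0 * q 2 : ℝ),
   (Real.cosh t * q 1 : ℝ) + I * (Real.sinh t * q 1 * q 2 : ℝ),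
   (q 2 : ℂ) + I * (Real.sinh t * Real.cosh t * (1 + q 2 ^ 2) : ℝ))

noncomputable def whitneyScale (q : EuclideanSpace ℝ (Fin 3)) : ℝ :=
  1 / (Real.cosh t ^ 2 + Real.sinh t ^ 2 * q 2 ^ 2)

noncomputable def whitneyExtension (q : EuclideanSpace ℝ (Fin 3)) : ℂ × ℂ × ℂ :=
  whitneyScale t q • whitneyNumerator t q

theorem whitneyLift_eq_comp : whitneyLift t = whitneyExtension t ∘ (↑) :=
  rfl

theorem differentiable_whitneyNumerator : Differentiable ℝ (whitneyNumerator t) := by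
  unfold whitneyNumerator
  fun_prop

theorem differentiable_whitneyScale : Differentiable ℝ (whitneyScale t) := by
  intro q
  unfold whitneyScale
  fun_prop (disch := positivity)

theorem fderiv_whitneyNumerator_apply (q v : EuclideanSpace ℝ (Fin 3)) :
    fderiv ℝ (whitneyNumerator t) q v =
      ((Real.cosh t * v 0 : ℝ) + I * (Real.sinh t * (v 0 * q 2 + q 0 * v 2) : ℝ),
       (Real.cosh t * v 1 : ℝ) + I * (Real.sinh t * (v 1 * q 2 + q 1 * v 2) : ℝ),
       (v 2 : ℂ) + I * (2 * Real.sinh t * Real.cosh t * q 2 * v 2 : ℝ)) := by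
  unfold whitneyNumerator
  simp (disch := fun_prop) only [DifferentiableAt.fderiv_prodMk, ContinuousLinearMap.prod_apply,
    ofReal_mul, ofReal_add, ofReal_pow, ofReal_ofNat, fderiv_fun_add, fderiv_fun_mul,
    fderiv_fun_const, fderiv_fun_pow, fderiv_ofReal_euclideanSpace_apply, add_apply, smul_apply,
    zero_apply, Pi.zero_apply, smul_eq_mul, Prod.mk.injEq]
  refine ⟨by ring, by ring, by ring⟩

theorem hermRe_fderiv_whitneyNumerator (q v : EuclideanSpace ℝ (Fin 3)) :
    hermRe (fderiv ℝ (whitneyNumerator t) q v) (I • whitneyNumerator t q) =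
      Real.cosh t * Real.sinh t * v 2 * (‖q‖ ^ 2 - 1) := by
  rw [fderiv_whitneyNumerator_apply, EuclideanSpace.norm_sq_eq, Fin.sum_univ_three]
  simp only [hermRe, whitneyNumerator, Prod.smul_mk, smul_eq_mul, map_add, map_mul, conj_I,
    conj_ofReal, add_re, add_im, mul_re, mul_im, neg_re, neg_im, I_re, I_im, ofReal_re, ofReal_im,
    Real.norm_eq_abs, sq_abs]
  ring

theorem differentiable_whitneyExtension : Differentiable ℝ (whitneyExtension t) :=
  (differentiable_whitneyScale t).smul (differentiable_whitneyNumerator t)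

theorem hermRe_fderiv_whitneyExtension (q v : EuclideanSpace ℝ (Fin 3)) :
    hermRe (fderiv ℝ (whitneyExtension t) q v) (I • whitneyExtension t q) =
      whitneyScale t q ^ 2 * (Real.cosh t * Real.sinh t * v 2 * (‖q‖ ^ 2 - 1)) := by
  rw [← hermRe_fderiv_whitneyNumerator]
  exact hermRe_fderiv_smul (differentiable_whitneyScale t q) (differentiable_whitneyNumerator t q) v

end WhitneySphere

theorem whitneyLift_horizontal_general (t : ℝ) :
    ∀ p : sphere (0 : EuclideanSpace ℝ (Fin 3)) 1,
      ∀ u : TangentSpace (𝓡 2) p,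
        hermRe (mfderiv (𝓡 2) 𝓘(ℝ, ℂ × ℂ × ℂ) (whitneyLift t) p u)
          (Complex.I • whitneyLift t p) = 0 := by
  intro p u
  have : Fact (Module.finrank ℝ (EuclideanSpace ℝ (Fin 3)) = 2 + 1) := ⟨finrank_euclideanSpace_fin⟩
  rw [whitneyLift_eq_comp, mfderiv_comp_coe_sphere (differentiable_whitneyExtension t _)]
  refine (hermRe_fderiv_whitneyExtension t _ _).trans ?_
  rw [norm_eq_of_mem_sphere]
  ring

/-- `F_t` is horizontal with respect to the Hopf fibration: for every `p ∈ S²` and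
every tangent vector `u`, `Re h(dF_t(u), i·F_t(p)) = 0`, i.e. the differential of
`F_t` is orthogonal to the Hopf vector field `p ↦ ip`. -/
theorem whitneyLift_horizontal (t : ℝ) (ht : 0 ≤ t) :
    ∀ p : sphere (0 : EuclideanSpace ℝ (Fin 3)) 1,
      ∀ u : TangentSpace (𝓡 2) p,
        hermRe (mfderiv (𝓡 2) 𝓘(ℝ, ℂ × ℂ × ℂ) (whitneyLift t) p u)
          (Complex.I • whitneyLift t p) = 0 :=
  whitneyLift_horizontal_general t
end

section
/- For t > 0, let c = cosh t, s = sinh t, and define G_t : S² → ℂ³ by G_t(x,y,z) = (1/(s² + c²z²))·(sx + icxz, sy + icyz, z - isc(1+z²)). Then for every (x,y,z) ∈ S², |G_t₁|² + |G_t₂|² - |G_t₃|² = -1, where G_t = (G_t₁, G_t₂, G_t₃); i.e. G_t maps into the anti-de Sitter space H⁵₁ = {w ∈ ℂ³ : |w₁|² + |w₂|² - |w₃|² = -1}. -/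
/-! Every component of `G_t` is the real factor `1/D`, `D = s² + c²z²`, times `a + i b`, so the
Hermitian form is `D⁻²` times a real polynomial. Using `x² + y² = 1 - z²` and `c² = 1 + s²`,
that polynomial equals `-D²`; `D > 0` because `s = sinh t > 0`. -/

open Complex Real

lemma norm_sq_ofReal_mul_add_I_mul (r a b : ℝ) :
    ‖(r : ℂ) * ((a : ℂ) + I * (b : ℂ))‖ ^ 2 = r ^ 2 * (a ^ 2 + b ^ 2) := by
  rw [norm_mul, mul_pow, norm_real, Real.norm_eq_abs, sq_abs, mul_comm I, Complex.sq_norm,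
    normSq_add_mul_I]

lemma norm_sq_ofReal_mul_sub_I_mul (r a b : ℝ) :
    ‖(r : ℂ) * ((a : ℂ) - I * (b : ℂ))‖ ^ 2 = r ^ 2 * (a ^ 2 + b ^ 2) := by
  rw [sub_eq_add_neg, ← mul_neg, ← ofReal_neg, norm_sq_ofReal_mul_add_I_mul, neg_sq]

lemma whitney_lift_numerator_identity {s c x y z : ℝ} (hcs : c ^ 2 = 1 + s ^ 2)
    (hxyz : x ^ 2 + y ^ 2 + z ^ 2 = 1) :
    ((s * x) ^ 2 + (c * x * z) ^ 2) + ((s * y) ^ 2 + (c * y * z) ^ 2)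
      - (z ^ 2 + (s * c * (1 + z ^ 2)) ^ 2) = -(s ^ 2 + c ^ 2 * z ^ 2) ^ 2 := by
  linear_combination (s ^ 2 + c ^ 2 * z ^ 2) * hxyz + (c ^ 2 * z ^ 4 + z ^ 2 - s ^ 2) * hcs

/-- The horizontal lift `G_t` of the Whitney sphere `Φ̂_t : S² → ℂH²` maps `S²` into the
anti-de Sitter space `H⁵₁ = {w ∈ ℂ³ : |w₁|² + |w₂|² - |w₃|² = -1}`: with `c = cosh t`,
`s = sinh t` (`t > 0`) and
`G_t(x,y,z) = (1/(s²+c²z²))·(sx + icxz, sy + icyz, z - isc(1+z²))`,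
one has `|G₁|² + |G₂|² - |G₃|² = -1` whenever `x²+y²+z² = 1`. -/
theorem whitney_lift_maps_into_antiDeSitter (t : ℝ) (ht : 0 < t) (c s : ℝ)
    (hc : c = Real.cosh t) (hs : s = Real.sinh t)
    (x y z : ℝ) (hxyz : x ^ 2 + y ^ 2 + z ^ 2 = 1)
    (G1 G2 G3 : ℂ)
    (hG1 : G1 = ((1 / (s ^ 2 + c ^ 2 * z ^ 2) : ℝ) : ℂ) *
      ((s * x : ℝ) + Complex.I * ((c * x * z : ℝ) : ℂ)))
    (hG2 : G2 = ((1 / (s ^ 2 + c ^ 2 * z ^ 2) : ℝ) : ℂ) *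
      ((s * y : ℝ) + Complex.I * ((c * y * z : ℝ) : ℂ)))
    (hG3 : G3 = ((1 / (s ^ 2 + c ^ 2 * z ^ 2) : ℝ) : ℂ) *
      ((z : ℂ) - Complex.I * ((s * c * (1 + z ^ 2) : ℝ) : ℂ))) :
    ‖G1‖ ^ 2 + ‖G2‖ ^ 2 - ‖G3‖ ^ 2 = -1 := by
  have hs_pos : 0 < s := hs ▸ sinh_pos_iff.2 ht
  have hD : s ^ 2 + c ^ 2 * z ^ 2 ≠ 0 := by positivity
  have hcs : c ^ 2 = 1 + s ^ 2 := by rw [hc, hs, cosh_sq']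
  rw [hG1, hG2, hG3, norm_sq_ofReal_mul_add_I_mul, norm_sq_ofReal_mul_add_I_mul,
    norm_sq_ofReal_mul_sub_I_mul, ← mul_add, ← mul_sub,
    whitney_lift_numerator_identity hcs hxyz]
  field_simp
end

section
/- For s ∈ [0, π/4), define w : ℂ* → ℂ by w(z) = cos(s)·z + sin(s)·conj(z), and Ψ̃_s : ℂ* → ℂ³ by Ψ̃_s(z) = (1/|w(z)|²)·(cos²(s)·z² - sin²(s)·conj(z)², ((|z|²-1)/√2)·w(z), ((|z|²+1)/√2)·w(z)). Then w(z) ≠ 0 for all z ≠ 0, and |Ψ̃_s₁(z)|² + |Ψ̃_s₂(z)|² - |Ψ̃_s₃(z)|² = -1 for all z ∈ ℂ*, so Ψ̃_s maps into H⁵₁. -/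
/-! Write `u = cos s · z` and `v = sin s · conj z`, so `w = u + v`, the first component is
`(u + v)(u - v) / |w|²` and `|z|² = |u|² + |v|²`. The last two components contribute
`-2|z|² / |w|²`, and the parallelogram law `|u + v|² + |u - v|² = 2(|u|² + |v|²)` turns the
total into `-|w|² / |w|² = -1`. For `0 ≤ s < π/4` one has `|sin s| < cos s`, so `u + v` cannot
vanish unless `z = 0`. -/

open ComplexConjugate

theorem Real.abs_sin_lt_cos {s : ℝ} (h₁ : -(Real.pi / 4) < s) (h₂ : s < Real.pi / 4) :
    |Real.sin s| < Real.cos s := by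
  have hcos2 : 0 < Real.cos (2 * s) :=
    Real.cos_pos_of_mem_Ioo ⟨by linarith, by linarith⟩
  have hcos : 0 < Real.cos s :=
    Real.cos_pos_of_mem_Ioo ⟨by linarith [Real.pi_pos], by linarith [Real.pi_pos]⟩
  rw [Real.cos_two_mul, ← Real.sin_sq_add_cos_sq s] at hcos2
  exact abs_lt_of_sq_lt_sq (by linarith) hcos.le

theorem Complex.mul_add_mul_conj_ne_zero {a b z : ℂ} (hab : ‖b‖ ≠ ‖a‖) (hz : z ≠ 0) :
    a * z + b * conj z ≠ 0 := by
  intro h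
  have hnorm : ‖a * z‖ = ‖b * conj z‖ := by rw [eq_neg_of_add_eq_zero_left h, norm_neg]
  rw [norm_mul, norm_mul, Complex.norm_conj] at hnorm
  exact hab (mul_right_cancel₀ (norm_ne_zero_iff.mpr hz) hnorm).symm

theorem lift_norm_sq_add_sub_eq_neg_one {u v : ℂ} (h : u + v ≠ 0) :
    ‖((1 / ‖u + v‖ ^ 2 : ℝ) : ℂ) * (u ^ 2 - v ^ 2)‖ ^ 2
      + ‖((1 / ‖u + v‖ ^ 2 : ℝ) : ℂ) * (((‖u‖ ^ 2 + ‖v‖ ^ 2 - 1) / Real.sqrt 2 : ℝ) : ℂ)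
          * (u + v)‖ ^ 2
      - ‖((1 / ‖u + v‖ ^ 2 : ℝ) : ℂ) * (((‖u‖ ^ 2 + ‖v‖ ^ 2 + 1) / Real.sqrt 2 : ℝ) : ℂ)
          * (u + v)‖ ^ 2 = -1 := by
  have hN : ‖u + v‖ ≠ 0 := norm_ne_zero_iff.mpr h
  have hpar := parallelogram_law_with_norm ℝ u v
  rw [show u ^ 2 - v ^ 2 = (u + v) * (u - v) by ring]
  simp only [norm_mul, Complex.norm_real, Real.norm_eq_abs, mul_pow, sq_abs, div_pow,
    Real.sq_sqrt zero_le_two]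
  field_simp
  linear_combination 2 * hpar

/-- The horizontal lift `Ψ̃_s` of the Lagrangian embedding `Ψ_s : ℂ* → ℂH²` (formula (4)
of the paper): for `s ∈ [0, π/4)` and `w(z) = cos s · z + sin s · conj z`, one has
`w(z) ≠ 0` for `z ≠ 0`, and with
`Ψ̃_s(z) = (1/|w(z)|²)·(cos²s·z² - sin²s·(conj z)², ((|z|²-1)/√2)·w(z), ((|z|²+1)/√2)·w(z))`
one has `|Ψ̃₁|² + |Ψ̃₂|² - |Ψ̃₃|² = -1`, so `Ψ̃_s` maps `ℂ*` into `H⁵₁`. -/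
theorem psi_lift_maps_into_antiDeSitter (s : ℝ) (hs0 : 0 ≤ s) (hs1 : s < Real.pi / 4)
    (w : ℂ → ℂ)
    (hw : ∀ z : ℂ, w z = (Real.cos s : ℂ) * z + (Real.sin s : ℂ) * (starRingEnd ℂ) z)
    (Ψ1 Ψ2 Ψ3 : ℂ → ℂ)
    (hΨ1 : ∀ z : ℂ, Ψ1 z = ((1 / ‖w z‖ ^ 2 : ℝ) : ℂ) *
      ((Real.cos s : ℂ) ^ 2 * z ^ 2 - (Real.sin s : ℂ) ^ 2 * ((starRingEnd ℂ) z) ^ 2))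
    (hΨ2 : ∀ z : ℂ, Ψ2 z = ((1 / ‖w z‖ ^ 2 : ℝ) : ℂ) *
      (((‖z‖ ^ 2 - 1) / Real.sqrt 2 : ℝ) : ℂ) * w z)
    (hΨ3 : ∀ z : ℂ, Ψ3 z = ((1 / ‖w z‖ ^ 2 : ℝ) : ℂ) *
      (((‖z‖ ^ 2 + 1) / Real.sqrt 2 : ℝ) : ℂ) * w z) :
    ∀ z : ℂ, z ≠ 0 →
      w z ≠ 0 ∧ ‖Ψ1 z‖ ^ 2 + ‖Ψ2 z‖ ^ 2 - ‖Ψ3 z‖ ^ 2 = -1 := by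
  intro z hz
  have hsc : |Real.sin s| < Real.cos s :=
    Real.abs_sin_lt_cos (by linarith [Real.pi_pos]) hs1
  have hwz : w z ≠ 0 := by
    rw [hw z]
    refine Complex.mul_add_mul_conj_ne_zero ?_ hz
    rw [Complex.norm_real, Complex.norm_real, Real.norm_eq_abs, Real.norm_eq_abs,
      abs_of_pos (hsc.trans_le' (abs_nonneg _))]
    exact hsc.ne
  have hnorm : ‖z‖ ^ 2 = ‖(Real.cos s : ℂ) * z‖ ^ 2 + ‖(Real.sin s : ℂ) * conj z‖ ^ 2 := by
    simp only [norm_mul, Complex.norm_real, Complex.norm_conj, Real.norm_eq_abs, mul_pow,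
      sq_abs]
    linear_combination (‖z‖ ^ 2) * (Real.sin_sq_add_cos_sq s).symm
  refine ⟨hwz, ?_⟩
  rw [hw z] at hwz
  rw [hΨ1 z, hΨ2 z, hΨ3 z, hw z, ← mul_pow, ← mul_pow, hnorm]
  exact lift_norm_sq_add_sub_eq_neg_one hwz
end

section
/- Define η̃ : ℝ² → ℂ³ by η̃(x,y) = (1/(1+4x²))·(2y + i·4xy, (2x - 4x³ - 4xy²) + i·(6x² + 2y²), (1 + 6x² + 2y²) + i·(4x³ + 4xy²)). Then for all (x,y) ∈ ℝ², |η̃₁|² + |η̃₂|² - |η̃₃|² = -1, so η̃ maps into the anti-de Sitter space H⁵₁ ⊂ ℂ³. -/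
/-! The three numerators of `η̃` satisfy the polynomial identity
`|n₁|² + |n₂|² - |n₃|² = -(1 + 4x²)²`, so dividing by the common real factor `1 + 4x²`
lands on the hyperquadric. -/

lemma Complex.sq_norm_ofReal_mul_add_I_mul (r a b : ℝ) :
    ‖(r : ℂ) * ((a : ℂ) + Complex.I * (b : ℂ))‖ ^ 2 = r ^ 2 * (a ^ 2 + b ^ 2) := by
  rw [mul_comm Complex.I, norm_mul, mul_pow, Complex.norm_real, Real.norm_eq_abs, sq_abs,
    Complex.sq_norm, Complex.normSq_add_mul_I]

lemma eta_lift_numerators_sq_sum (x y : ℝ) :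
    ((2 * y) ^ 2 + (4 * x * y) ^ 2)
      + ((2 * x - 4 * x ^ 3 - 4 * x * y ^ 2) ^ 2 + (6 * x ^ 2 + 2 * y ^ 2) ^ 2)
      - ((1 + 6 * x ^ 2 + 2 * y ^ 2) ^ 2 + (4 * x ^ 3 + 4 * x * y ^ 2) ^ 2)
      = -(1 + 4 * x ^ 2) ^ 2 := by
  ring

/-- The horizontal lift `η̃` of the Lagrangian embedding `η : ℂ → ℂH²` (formula (5)
of the paper) maps `ℝ²` into the anti-de Sitter space
`H⁵₁ = {w ∈ ℂ³ : |w₁|² + |w₂|² - |w₃|² = -1}`. -/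
theorem eta_lift_maps_into_antiDeSitter
    (η1 η2 η3 : ℝ → ℝ → ℂ)
    (h1 : ∀ x y : ℝ, η1 x y = ((1 / (1 + 4 * x ^ 2) : ℝ) : ℂ) *
      ((2 * y : ℝ) + Complex.I * ((4 * x * y : ℝ) : ℂ)))
    (h2 : ∀ x y : ℝ, η2 x y = ((1 / (1 + 4 * x ^ 2) : ℝ) : ℂ) *
      (((2 * x - 4 * x ^ 3 - 4 * x * y ^ 2 : ℝ) : ℂ)
        + Complex.I * ((6 * x ^ 2 + 2 * y ^ 2 : ℝ) : ℂ)))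
    (h3 : ∀ x y : ℝ, η3 x y = ((1 / (1 + 4 * x ^ 2) : ℝ) : ℂ) *
      (((1 + 6 * x ^ 2 + 2 * y ^ 2 : ℝ) : ℂ)
        + Complex.I * ((4 * x ^ 3 + 4 * x * y ^ 2 : ℝ) : ℂ))) :
    ∀ x y : ℝ, ‖η1 x y‖ ^ 2 + ‖η2 x y‖ ^ 2 - ‖η3 x y‖ ^ 2 = -1 := by
  intro x y
  have hd : (1 + 4 * x ^ 2 : ℝ) ≠ 0 := by positivity
  rw [h1, h2, h3, Complex.sq_norm_ofReal_mul_add_I_mul, Complex.sq_norm_ofReal_mul_add_I_mul,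
    Complex.sq_norm_ofReal_mul_add_I_mul, ← mul_add, ← mul_sub, eta_lift_numerators_sq_sum]
  field_simp
end
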